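/- arXiv:2505.08212 — 5 statements merged into one kernel-verified Lean document; each statement's English description precedes it below -/
import Mathlib

section
/- Double Intra-similarity Theorem (HNC+ case): If α ≥ β ≥ 0, then for every nonempty proper subset S of V, C(S,S̄) − α·C(S,S) − β·C(S̄,S̄) = (1+β)·(C(S,S̄) − μ·C(S,S)) − β·W_V, where μ = (α−β)/(1+β). Consequently a subset S* minimizes C(S,S̄) − α·C(S,S) − β·C(S̄,S̄) over nonempty proper subsets of V if and only if S* minimizes C(S,S̄) − μ·C(S,S). -/
/-- C(S, S̄): inter-similarity between `S` and its complement. -/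
noncomputable def interW {V : Type*} [Fintype V] [DecidableEq V]
    (w : V → V → ℝ) (S : Finset V) : ℝ :=
  ∑ i ∈ S, ∑ j ∈ Sᶜ, w i j

/-- C(S,S): intra-similarity of `S`, each internal edge counted once. -/
noncomputable def intraW {V : Type*} [Fintype V] [DecidableEq V]
    (w : V → V → ℝ) (S : Finset V) : ℝ :=
  (1 / 2) * ∑ i ∈ S, ∑ j ∈ S, w i j

/-- W_V: total weight of all edges. -/
noncomputable def totalW (V : Type*) [Fintype V] [DecidableEq V]
    (w : V → V → ℝ) : ℝ :=
  (1 / 2) * ∑ i : V, ∑ j : V, w i j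

lemma totalW_split {V : Type*} [Fintype V] [DecidableEq V]
    (w : V → V → ℝ) (hsymm : ∀ i j, w i j = w j i) (S : Finset V) :
    totalW V w = interW w S + intraW w S + intraW w Sᶜ := by
  have hx : ∑ i ∈ S, ∑ j ∈ Sᶜ, w i j = ∑ i ∈ Sᶜ, ∑ j ∈ S, w i j := by
    rw [Finset.sum_comm]
    simp_rw [hsymm]
  unfold totalW interW intraW
  rw [← Finset.sum_add_sum_compl S (fun i => ∑ j : V, w i j)]
  have h1 : ∀ i, ∑ j : V, w i j = ∑ j ∈ S, w i j + ∑ j ∈ Sᶜ, w i j :=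
    fun i => (Finset.sum_add_sum_compl S _).symm
  simp_rw [h1]
  rw [Finset.sum_add_distrib, Finset.sum_add_distrib, ← hx]
  ring

/-- Double Intra-similarity Theorem, HNC+ case (α ≥ β ≥ 0). -/
theorem double_intra_similarity_HNCplus {V : Type*} [Fintype V] [DecidableEq V]
    (w : V → V → ℝ) (hsymm : ∀ i j, w i j = w j i) (hdiag : ∀ i, w i i = 0)
    (α β : ℝ) (hβ : 0 ≤ β) (hαβ : β ≤ α) :
    (∀ S : Finset V, S.Nonempty → S ≠ Finset.univ →
      interW w S - α * intraW w S - β * intraW w Sᶜ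
        = (1 + β) * (interW w S - ((α - β) / (1 + β)) * intraW w S)
            - β * totalW V w)
    ∧ (∀ Sstar : Finset V, Sstar.Nonempty → Sstar ≠ Finset.univ →
        ((∀ S : Finset V, S.Nonempty → S ≠ Finset.univ →
            interW w Sstar - α * intraW w Sstar - β * intraW w Sstarᶜ
              ≤ interW w S - α * intraW w S - β * intraW w Sᶜ)
          ↔ (∀ S : Finset V, S.Nonempty → S ≠ Finset.univ →
            interW w Sstar - ((α - β) / (1 + β)) * intraW w Sstar
              ≤ interW w S - ((α - β) / (1 + β)) * intraW w S))) := by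
  have h1b : (1:ℝ) + β ≠ 0 := by linarith
  have hid : ∀ S : Finset V,
      interW w S - α * intraW w S - β * intraW w Sᶜ
        = (1 + β) * (interW w S - ((α - β) / (1 + β)) * intraW w S)
            - β * totalW V w := by
    intro S
    have hk := totalW_split w hsymm S
    have hc : intraW w Sᶜ = totalW V w - interW w S - intraW w S := by linarith
    rw [hc]
    field_simp
    ring
  refine ⟨fun S _ _ => hid S, fun Sst _ _ => ⟨fun h S hS hS' => ?_, fun h S hS hS' => ?_⟩⟩
  · have := h S hS hS'
    rw [hid Sst, hid S] at this
    nlinarith [this, show (0:ℝ) < 1 + β by linarith]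
  · have := h S hS hS'
    rw [hid Sst, hid S]
    nlinarith [this, show (0:ℝ) < 1 + β by linarith]
end

section
/- Double Intra-similarity Theorem (HNC− case): If β > α ≥ 0, then for every nonempty proper subset S of V, C(S,S̄) − α·C(S,S) − β·C(S̄,S̄) = (1+α)·(C(S,S̄) − μ·C(S̄,S̄)) − α·W_V, where μ = (β−α)/(1+α). Consequently a subset S* minimizes C(S,S̄) − α·C(S,S) − β·C(S̄,S̄) over nonempty proper subsets of V if and only if S* minimizes C(S,S̄) − μ·C(S̄,S̄). -/
/-- Double Intra-similarity Theorem, HNC− case (β > α ≥ 0). -/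
theorem double_intra_similarity_HNCminus {V : Type*} [Fintype V] [DecidableEq V]
    (w : V → V → ℝ) (hsymm : ∀ i j, w i j = w j i) (hdiag : ∀ i, w i i = 0)
    (α β : ℝ) (hα : 0 ≤ α) (hαβ : α < β) :
    (∀ S : Finset V, S.Nonempty → S ≠ Finset.univ →
      interW w S - α * intraW w S - β * intraW w Sᶜ
        = (1 + α) * (interW w S - ((β - α) / (1 + α)) * intraW w Sᶜ)
            - α * totalW V w)
    ∧ (∀ Sstar : Finset V, Sstar.Nonempty → Sstar ≠ Finset.univ →
        ((∀ S : Finset V, S.Nonempty → S ≠ Finset.univ →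
            interW w Sstar - α * intraW w Sstar - β * intraW w Sstarᶜ
              ≤ interW w S - α * intraW w S - β * intraW w Sᶜ)
          ↔ (∀ S : Finset V, S.Nonempty → S ≠ Finset.univ →
            interW w Sstar - ((β - α) / (1 + α)) * intraW w Sstarᶜ
              ≤ interW w S - ((β - α) / (1 + α)) * intraW w Sᶜ))) := by
  have h1α : (0:ℝ) < 1 + α := by linarith
  have hne : (1:ℝ) + α ≠ 0 := ne_of_gt h1α
  have key : ∀ S : Finset V,
      interW w S - α * intraW w S - β * intraW w Sᶜ
        = (1 + α) * (interW w S - ((β - α) / (1 + α)) * intraW w Sᶜ)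
            - α * totalW V w := by
    intro S
    rw [totalW_split w hsymm S]
    field_simp
    ring
  refine ⟨fun S _ _ => key S, fun Sstar _ _ => ?_⟩
  constructor
  · intro h S hS hS'
    have := h S hS hS'
    rw [key Sstar, key S] at this
    have h2 : (1 + α) * (interW w Sstar - (β - α) / (1 + α) * intraW w Sstarᶜ)
        ≤ (1 + α) * (interW w S - (β - α) / (1 + α) * intraW w Sᶜ) := by linarith
    exact le_of_mul_le_mul_left h2 h1α
  · intro h S hS hS'
    have := h S hS hS'
    rw [key Sstar, key S]
    nlinarith [this]
end

section
/- Compact reformulation of HNC−: For μ ≥ 0 and any nonempty proper subset S of V with complement S̄, C(S,S̄) − μ·C(S̄,S̄) = (1 + μ/2)·(C(S,S̄) − λ·Σ_{i∈S̄} d_i), where λ = μ/(μ+2). Hence minimizing C(S,S̄) − μ·C(S̄,S̄) over nonempty proper subsets of V is equivalent to minimizing C(S,S̄) − λ·Σ_{i∈S̄} d_i. -/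
/-- `deg w i` is the weighted degree d_i = Σ_{j ≠ i} w_{ij}. -/
noncomputable def deg {V : Type*} [Fintype V] [DecidableEq V]
    (w : V → V → ℝ) (i : V) : ℝ :=
  ∑ j ∈ ({i} : Finset V)ᶜ, w i j

lemma deg_sum_eq {V : Type*} [Fintype V] [DecidableEq V]
    (w : V → V → ℝ) (hsymm : ∀ i j, w i j = w j i) (hdiag : ∀ i, w i i = 0)
    (S : Finset V) :
    ∑ i ∈ Sᶜ, deg w i = interW w S + 2 * intraW w Sᶜ := by
  have hdeg : ∀ i, deg w i = ∑ j, w i j := by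
    intro i
    rw [deg, ← Finset.sum_compl_add_sum ({i} : Finset V) (fun j => w i j)]
    simp [hdiag]
  have : ∑ i ∈ Sᶜ, deg w i = ∑ i ∈ Sᶜ, (∑ j ∈ S, w i j + ∑ j ∈ Sᶜ, w i j) := by
    refine Finset.sum_congr rfl fun i _ => ?_
    rw [hdeg, ← Finset.sum_compl_add_sum S (fun j => w i j), add_comm]
  rw [this, Finset.sum_add_distrib, interW, intraW]
  rw [Finset.sum_comm (s := Sᶜ) (t := S)]
  simp only [hsymm]
  ring

/-- Compact reformulation of HNC− with λ = μ/(μ+2). -/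
theorem HNCminus_compact_reformulation {V : Type*} [Fintype V] [DecidableEq V]
    (w : V → V → ℝ) (hsymm : ∀ i j, w i j = w j i) (hdiag : ∀ i, w i i = 0)
    (μ : ℝ) (hμ : 0 ≤ μ) :
    (∀ S : Finset V, S.Nonempty → S ≠ Finset.univ →
      interW w S - μ * intraW w Sᶜ
        = (1 + μ / 2) * (interW w S - (μ / (μ + 2)) * ∑ i ∈ Sᶜ, deg w i))
    ∧ (∀ Sstar : Finset V, Sstar.Nonempty → Sstar ≠ Finset.univ →
        ((∀ S : Finset V, S.Nonempty → S ≠ Finset.univ →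
            interW w Sstar - μ * intraW w Sstarᶜ ≤ interW w S - μ * intraW w Sᶜ)
          ↔ (∀ S : Finset V, S.Nonempty → S ≠ Finset.univ →
            interW w Sstar - (μ / (μ + 2)) * ∑ i ∈ Sstarᶜ, deg w i
              ≤ interW w S - (μ / (μ + 2)) * ∑ i ∈ Sᶜ, deg w i))) := by
  have h2 : (0:ℝ) < μ + 2 := by linarith
  have key : ∀ S : Finset V,
      interW w S - μ * intraW w Sᶜ
        = (1 + μ / 2) * (interW w S - (μ / (μ + 2)) * ∑ i ∈ Sᶜ, deg w i) := by
    intro S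
    rw [deg_sum_eq w hsymm hdiag S]
    field_simp
    ring
  refine ⟨fun S _ _ => key S, fun Sstar _ _ => ?_⟩
  have hpos : (0:ℝ) < 1 + μ / 2 := by linarith
  constructor
  · intro h S hS hS'
    have := h S hS hS'
    rw [key Sstar, key S] at this
    exact le_of_mul_le_mul_left this hpos
  · intro h S hS hS'
    rw [key Sstar, key S]
    exact mul_le_mul_of_nonneg_left (h S hS hS') hpos.le
end

section
/- Nested cut property (two-parameter case): Let G be a finite directed graph with source s and sink t, whose arc capacities are: c_{si}(λ) non-increasing in λ for source-adjacent arcs, c_{it}(λ) non-decreasing in λ for sink-adjacent arcs, and constant for all other arcs, all capacities nonnegative. Let λ₁ < λ₂ and let (S₁, T₁) and (S₂, T₂) be the minimal-source-set minimum (s,t)-cuts for λ₁ and λ₂ respectively. Then T₁ ⊆ T₂. -/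
/-- Capacity of the (s,t)-cut with source set `S` in the parametric graph with
capacities `c lam`. -/
noncomputable def cutCap {V : Type*} [Fintype V] [DecidableEq V]
    (c : ℝ → V → V → ℝ) (lam : ℝ) (S : Finset V) : ℝ :=
  ∑ i ∈ S, ∑ j ∈ Sᶜ, c lam i j

lemma cutCap_eq_sum_ite {V : Type*} [Fintype V] [DecidableEq V]
    (c : ℝ → V → V → ℝ) (lam : ℝ) (S : Finset V) :
    cutCap c lam S =
      ∑ i ∈ Finset.univ, ∑ j ∈ Finset.univ,
        (if i ∈ S ∧ j ∉ S then c lam i j else 0) := by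
  unfold cutCap
  rw [← Finset.sum_filter_add_sum_filter_not Finset.univ (fun i => i ∈ S)]
  have h2 : ∀ i : V, (∑ j ∈ Finset.univ, if i ∈ S ∧ j ∉ S then c lam i j else 0)
      = if i ∈ S then ∑ j ∈ Sᶜ, c lam i j else 0 := by
    intro i
    by_cases hi : i ∈ S
    · simp only [hi, true_and, if_true]
      rw [← Finset.sum_filter]
      congr 1
      ext j; simp
    · simp [hi]
  simp only [h2]
  rw [Finset.sum_filter_add_sum_filter_not Finset.univ (fun i => i ∈ S)
      (fun i => if i ∈ S then ∑ j ∈ Sᶜ, c lam i j else 0)]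
  rw [Finset.sum_ite_mem]
  simp

lemma cutCap_submodular {V : Type*} [Fintype V] [DecidableEq V]
    (c : ℝ → V → V → ℝ) (lam : ℝ)
    (hnonneg : ∀ i j, 0 ≤ c lam i j) (A B : Finset V) :
    cutCap c lam (A ∩ B) + cutCap c lam (A ∪ B) ≤
      cutCap c lam A + cutCap c lam B := by
  simp only [cutCap_eq_sum_ite]
  rw [← Finset.sum_add_distrib, ← Finset.sum_add_distrib]
  refine Finset.sum_le_sum (fun i _ => ?_)
  rw [← Finset.sum_add_distrib, ← Finset.sum_add_distrib]
  refine Finset.sum_le_sum (fun j _ => ?_)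
  have h := hnonneg i j
  by_cases hiA : i ∈ A <;> by_cases hiB : i ∈ B <;>
    by_cases hjA : j ∈ A <;> by_cases hjB : j ∈ B <;>
    simp [Finset.mem_inter, Finset.mem_union, hiA, hiB, hjA, hjB] <;> linarith

lemma cutCap_diff_mono {V : Type*} [Fintype V] [DecidableEq V]
    (s t : V) (c : ℝ → V → V → ℝ)
    (hsrc : ∀ i, Antitone (fun lam => c lam s i))
    (hsink : ∀ i, Monotone (fun lam => c lam i t))
    (hconst : ∀ i j, i ≠ s → j ≠ t → ∀ lam₁ lam₂, c lam₁ i j = c lam₂ i j)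
    (lam₁ lam₂ : ℝ) (hlam : lam₁ ≤ lam₂)
    (A B : Finset V) (hAB : A ⊆ B) (hsA : s ∈ A) (htB : t ∉ B) :
    cutCap c lam₂ A + cutCap c lam₁ B ≤ cutCap c lam₂ B + cutCap c lam₁ A := by
  simp only [cutCap_eq_sum_ite]
  rw [← Finset.sum_add_distrib, ← Finset.sum_add_distrib]
  refine Finset.sum_le_sum (fun i _ => ?_)
  rw [← Finset.sum_add_distrib, ← Finset.sum_add_distrib]
  refine Finset.sum_le_sum (fun j _ => ?_)
  by_cases hiA : i ∈ A <;> by_cases hjB : j ∈ B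
  · -- i ∈ A ⊆ B
    have hiB : i ∈ B := hAB hiA
    by_cases hjA : j ∈ A
    · simp [hiA, hiB, hjA, hjB]
    · -- j ∈ B \ A : need c lam₂ i j ≤ c lam₁ i j
      have hjt : j ≠ t := fun h => htB (h ▸ hjB)
      have hle : c lam₂ i j ≤ c lam₁ i j := by
        by_cases his : i = s
        · subst his; exact hsrc j hlam
        · exact le_of_eq (hconst i j his hjt lam₂ lam₁)
      simp only [hiA, hiB, hjA, hjB, true_and, not_true, and_false, if_false,
        not_false_iff, if_true]
      linarith
  · -- j ∉ B, so j ∉ A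
    have hjA : j ∉ A := fun h => hjB (hAB h)
    have hiB : i ∈ B := hAB hiA
    simp [hiA, hiB, hjA, hjB]
  · -- i ∉ A
    by_cases hiB : i ∈ B
    · -- i ∈ B \ A, j ∈ B : both relevant terms vanish
      simp [hiA, hjB]
    · simp [hiA, hiB]
  · -- i ∉ A, j ∉ B
    by_cases hiB : i ∈ B
    · -- i ∈ B \ A, j ∉ B : need c lam₁ i j ≤ c lam₂ i j
      have his : i ≠ s := fun h => hiA (h ▸ hsA)
      have hjA : j ∉ A := fun h => hjB (hAB h)
      have hle : c lam₁ i j ≤ c lam₂ i j := by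
        by_cases hjt : j = t
        · subst hjt; exact hsink i hlam
        · exact le_of_eq (hconst i j his hjt lam₁ lam₂)
      simp only [hiA, hiB, hjA, hjB, true_and, and_false, false_and, if_false,
        not_false_iff, if_true]
      linarith
    · simp [hiA, hiB]

/-- Nested cut property: with source-adjacent capacities non-increasing in λ,
sink-adjacent capacities non-decreasing in λ, and all other capacities constant,
the sink sets of the minimal-source-set minimum cuts are nested: T₁ ⊆ T₂ for
λ₁ < λ₂. -/
theorem nested_cut_property {V : Type*} [Fintype V] [DecidableEq V]
    (s t : V) (hst : s ≠ t)
    (c : ℝ → V → V → ℝ)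
    (hnonneg : ∀ lam i j, 0 ≤ c lam i j)
    (hsrc : ∀ i, Antitone (fun lam => c lam s i))
    (hsink : ∀ i, Monotone (fun lam => c lam i t))
    (hconst : ∀ i j, i ≠ s → j ≠ t → ∀ lam₁ lam₂, c lam₁ i j = c lam₂ i j)
    (lam₁ lam₂ : ℝ) (hlam : lam₁ < lam₂)
    (S₁ S₂ : Finset V)
    (hS₁s : s ∈ S₁) (hS₁t : t ∉ S₁) (hS₂s : s ∈ S₂) (hS₂t : t ∉ S₂)
    (hmin₁ : ∀ S : Finset V, s ∈ S → t ∉ S → cutCap c lam₁ S₁ ≤ cutCap c lam₁ S)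
    (hminimal₁ : ∀ S : Finset V, s ∈ S → t ∉ S →
      cutCap c lam₁ S = cutCap c lam₁ S₁ → S₁ ⊆ S)
    (hmin₂ : ∀ S : Finset V, s ∈ S → t ∉ S → cutCap c lam₂ S₂ ≤ cutCap c lam₂ S)
    (hminimal₂ : ∀ S : Finset V, s ∈ S → t ∉ S →
      cutCap c lam₂ S = cutCap c lam₂ S₂ → S₂ ⊆ S) :
    S₁ᶜ ⊆ S₂ᶜ := by
  have hIs : s ∈ S₁ ∩ S₂ := Finset.mem_inter.mpr ⟨hS₁s, hS₂s⟩
  have hIt : t ∉ S₁ ∩ S₂ := fun h => hS₁t (Finset.mem_inter.mp h).1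
  have hUs : s ∈ S₁ ∪ S₂ := Finset.mem_union_left _ hS₁s
  have hUt : t ∉ S₁ ∪ S₂ := fun h => (Finset.mem_union.mp h).elim hS₁t hS₂t
  have hsub := cutCap_submodular c lam₂ (hnonneg lam₂) S₁ S₂
  have hdiff := cutCap_diff_mono s t c hsrc hsink hconst lam₁ lam₂ hlam.le
    S₁ (S₁ ∪ S₂) Finset.subset_union_left hS₁s hUt
  have h1 := hmin₁ (S₁ ∪ S₂) hUs hUt
  have h2 := hmin₂ (S₁ ∩ S₂) hIs hIt
  have heq : cutCap c lam₂ (S₁ ∩ S₂) = cutCap c lam₂ S₂ := by linarith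
  have hS : S₂ ⊆ S₁ ∩ S₂ := hminimal₂ (S₁ ∩ S₂) hIs hIt heq
  exact Finset.compl_subset_compl.mpr
    (fun x hx => (Finset.mem_inter.mp (hS hx)).1)
end

section
/- For the parametric problem g_λ(S) = f(S) − λ·h(S) with f submodular and h(S) = Σ_{i∈S} a_i for nonnegative reals a_i, if λ₁ < λ₂ and S₁, S₂ are the unique inclusion-minimal minimizers of g_{λ₁}, g_{λ₂} respectively, then S₁ ⊆ S₂. -/
/-- Nestedness of the unique inclusion-minimal minimizers of the parametric
objective g_λ(S) = f(S) − λ·Σ_{i∈S} a_i with f submodular and a_i ≥ 0. -/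
theorem minimal_minimizers_nested {V : Type*} [Fintype V] [DecidableEq V]
    (f : Finset V → ℝ)
    (hsub : ∀ S T : Finset V, f (S ∪ T) + f (S ∩ T) ≤ f S + f T)
    (a : V → ℝ) (ha : ∀ i, 0 ≤ a i)
    (lam₁ lam₂ : ℝ) (hlam : lam₁ < lam₂)
    (S₁ S₂ : Finset V)
    (hS₁min : ∀ S : Finset V,
      f S₁ - lam₁ * ∑ i ∈ S₁, a i ≤ f S - lam₁ * ∑ i ∈ S, a i)
    (hS₁minimal : ∀ S : Finset V,
      (∀ T : Finset V, f S - lam₁ * ∑ i ∈ S, a i ≤ f T - lam₁ * ∑ i ∈ T, a i) →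
      S₁ ⊆ S)
    (hS₂min : ∀ S : Finset V,
      f S₂ - lam₂ * ∑ i ∈ S₂, a i ≤ f S - lam₂ * ∑ i ∈ S, a i)
    (hS₂minimal : ∀ S : Finset V,
      (∀ T : Finset V, f S - lam₂ * ∑ i ∈ S, a i ≤ f T - lam₂ * ∑ i ∈ T, a i) →
      S₂ ⊆ S) :
    S₁ ⊆ S₂ := by
  have hmod : (∑ i ∈ S₁ ∪ S₂, a i) + ∑ i ∈ S₁ ∩ S₂, a i
      = (∑ i ∈ S₁, a i) + ∑ i ∈ S₂, a i := Finset.sum_union_inter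
  have hd : (∑ i ∈ S₁ ∩ S₂, a i) ≤ ∑ i ∈ S₁, a i :=
    Finset.sum_le_sum_of_subset_of_nonneg Finset.inter_subset_left
      (fun i _ _ => ha i)
  have h1 := hS₁min (S₁ ∩ S₂)
  have h2 := hS₂min (S₁ ∪ S₂)
  have hsm := hsub S₁ S₂
  have hm2 : lam₂ * ((∑ i ∈ S₁ ∪ S₂, a i) + ∑ i ∈ S₁ ∩ S₂, a i)
      = lam₂ * ((∑ i ∈ S₁, a i) + ∑ i ∈ S₂, a i) := by rw [hmod]
  have key : lam₂ * ((∑ i ∈ S₁, a i) - ∑ i ∈ S₁ ∩ S₂, a i)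
      ≤ lam₁ * ((∑ i ∈ S₁, a i) - ∑ i ∈ S₁ ∩ S₂, a i) := by
    nlinarith [h1, h2, hsm, hm2]
  have hd0 : (∑ i ∈ S₁, a i) = ∑ i ∈ S₁ ∩ S₂, a i := by
    by_contra hne
    have hpos : 0 < (∑ i ∈ S₁, a i) - ∑ i ∈ S₁ ∩ S₂, a i := by
      rcases lt_or_eq_of_le hd with h | h
      · linarith
      · exact absurd h.symm hne
    have := mul_lt_mul_of_pos_right hlam hpos
    linarith
  have hun : (∑ i ∈ S₁ ∪ S₂, a i) = ∑ i ∈ S₂, a i := by linarith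
  have hm3 : lam₂ * (∑ i ∈ S₁ ∪ S₂, a i) = lam₂ * ∑ i ∈ S₂, a i := by rw [hun]
  have hfle : f (S₁ ∩ S₂) ≤ f S₁ := by linarith
  have hm1 : lam₁ * (∑ i ∈ S₁, a i) = lam₁ * ∑ i ∈ S₁ ∩ S₂, a i := by rw [hd0]
  have hmin : ∀ T : Finset V,
      f (S₁ ∩ S₂) - lam₁ * ∑ i ∈ S₁ ∩ S₂, a i ≤ f T - lam₁ * ∑ i ∈ T, a i := by
    intro T
    have := hS₁min T
    linarith
  exact (hS₁minimal (S₁ ∩ S₂) hmin).trans Finset.inter_subset_right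
end
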